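/- Let k be a field with char k ≠ 2 containing an element i with i² = −1. Let (x,x*) ∈ H × H be nonzero, set μ = 1 if ⟨x*,x⟩ = 1 and μ = i if ⟨x*,x⟩ = −1, and let M := μ·β_{x*}·α_x. Then for every (y,y*) ∈ H × H, the invertible matrix N := β_{y*}·α_y maps the eigenspace ker(M − 1) isomorphically onto ker(M − ε·1), where ε = ⟨x*,y⟩·⟨y*,x⟩. In particular N preserves each of the two eigenspaces of M when ε = 1, and interchanges them when ε = −1. -/

import Mathlib

open Matrix

/-- The group `H = (ℤ/2ℤ)²`, with elements written `00, 01, 10, 11`. -/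
abbrev H2 : Type := ZMod 2 × ZMod 2

/-- The pairing `⟨x, z⟩ = (−1)^(x₁z₁ + x₂z₂) ∈ k`. -/
def pairing (k : Type*) [Field k] (x z : H2) : k :=
  (-1 : k) ^ (x.1.val * z.1.val + x.2.val * z.2.val)

/-- `α_x`: the permutation matrix of `z ↦ z + x`, sending `e_z` to `e_{z+x}`. -/
def alphaM (k : Type*) [Field k] (x : H2) : Matrix H2 H2 k :=
  Matrix.of fun i j => if i = j + x then 1 else 0

/-- `β_{x*}`: the diagonal matrix with entry `⟨x*, z⟩` at position `z`. -/
def betaM (k : Type*) [Field k] (xs : H2) : Matrix H2 H2 k :=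
  Matrix.diagonal fun z => pairing k xs z

lemma H2_add_self (a : H2) : a + a = 0 := by
  obtain ⟨a1, a2⟩ := a; fin_cases a1 <;> fin_cases a2 <;> decide

lemma v1 : ZMod.val (1 : ZMod 2) = 1 := rfl
lemma v2 : ZMod.val (2 : ZMod 2) = 0 := rfl

lemma pairing_add_right (k : Type*) [Field k] (x z w : H2) :
    pairing k x (z + w) = pairing k x z * pairing k x w := by
  obtain ⟨x1,x2⟩ := x; obtain ⟨z1,z2⟩ := z; obtain ⟨w1,w2⟩ := w
  fin_cases x1 <;> fin_cases x2 <;> fin_cases z1 <;> fin_cases z2 <;> fin_cases w1 <;> fin_cases w2 <;>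
    (simp only [pairing, ← pow_add]; rw [neg_one_pow_eq_pow_mod_two]; conv_rhs => rw [neg_one_pow_eq_pow_mod_two]) <;> rfl

lemma pairing_mul_self (k : Type*) [Field k] (x z : H2) :
    pairing k x z * pairing k x z = 1 := by
  rw [pairing, ← pow_add]; exact Even.neg_one_pow ⟨_, rfl⟩

lemma H2_eq_add_iff (a b c : H2) : (a = b + c) ↔ (b = a + c) := by
  constructor <;> rintro rfl <;> rw [add_assoc, H2_add_self, add_zero]

lemma H2_add_eq_iff (a c b : H2) : (a + c = b) ↔ (a = b + c) := by
  constructor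
  · rintro rfl; rw [add_assoc, H2_add_self, add_zero]
  · rintro rfl; rw [add_assoc, H2_add_self, add_zero]

lemma alphaM_mul_alphaM (k : Type*) [Field k] (a b : H2) :
    alphaM k a * alphaM k b = alphaM k (a + b) := by
  ext i j
  simp only [alphaM, Matrix.mul_apply, Matrix.of_apply]
  rw [Finset.sum_eq_single (i + a)]
  · rw [add_assoc, H2_add_self, add_zero, if_pos rfl, one_mul]
    congr 1
    rw [eq_iff_iff, H2_add_eq_iff, add_assoc, add_comm b a]
  · intro m _ hm
    rw [if_neg (fun h => hm ((H2_eq_add_iff i m a).mp h)), zero_mul]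
  · intro h; exact absurd (Finset.mem_univ _) h

lemma alphaM_zero (k : Type*) [Field k] : alphaM k 0 = 1 := by
  ext i j
  simp [alphaM, Matrix.one_apply]

lemma betaM_mul_betaM (k : Type*) [Field k] (a b : H2) :
    betaM k a * betaM k b = betaM k b * betaM k a := by
  simp [betaM, Matrix.diagonal_mul_diagonal, mul_comm]

lemma betaM_mul_self (k : Type*) [Field k] (b : H2) :
    betaM k b * betaM k b = 1 := by
  simp [betaM, Matrix.diagonal_mul_diagonal, pairing_mul_self]

lemma alphaM_mul_betaM (k : Type*) [Field k] (a b : H2) :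
    alphaM k a * betaM k b = pairing k b a • (betaM k b * alphaM k a) := by
  ext i j
  simp only [alphaM, betaM, Matrix.mul_diagonal, Matrix.diagonal_mul, Matrix.of_apply,
    Matrix.smul_apply, smul_eq_mul]
  by_cases h : i = j + a
  · rw [if_pos h, one_mul, mul_one, h, pairing_add_right, ← mul_assoc,
      mul_comm (pairing k b a) (pairing k b j), mul_assoc, pairing_mul_self, mul_one]
  · rw [if_neg h, zero_mul, mul_zero, mul_zero]

/-- Canonical form of a product of two `β·α` blocks. -/
lemma core (k : Type*) [Field k] (a b as bs : H2) :
    (betaM k bs * alphaM k b) * (betaM k as * alphaM k a)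
      = pairing k as b • ((betaM k as * betaM k bs) * alphaM k (a + b)) := by
  calc (betaM k bs * alphaM k b) * (betaM k as * alphaM k a)
      = betaM k bs * ((alphaM k b * betaM k as) * alphaM k a) := by
        rw [mul_assoc, mul_assoc]
    _ = betaM k bs * ((pairing k as b • (betaM k as * alphaM k b)) * alphaM k a) := by
        rw [alphaM_mul_betaM]
    _ = pairing k as b • (betaM k bs * (betaM k as * (alphaM k b * alphaM k a))) := by
        rw [Matrix.smul_mul, Matrix.mul_smul, mul_assoc]
    _ = pairing k as b • ((betaM k as * betaM k bs) * alphaM k (a + b)) := by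
        rw [← mul_assoc, betaM_mul_betaM, alphaM_mul_alphaM, add_comm b a]

lemma ker_mem_iff {n : Type*} [Fintype n] [DecidableEq n] {R : Type*} [CommRing R]
    (M : Matrix n n R) (c : R) (v : n → R) :
    (M - c • 1).mulVec v = 0 ↔ M.mulVec v = c • v := by
  rw [Matrix.sub_mulVec, sub_eq_zero, Matrix.smul_mulVec, Matrix.one_mulVec]

/-- Abstract eigenspace-mapping lemma: if `N` is invertible with inverse `B`,
`ε² = 1` and `N·M = ε·M·N`, then `N` maps `ker(M − c·1)` onto `ker(M − εc·1)`. -/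
lemma key {n : Type*} [Fintype n] [DecidableEq n] {R : Type*} [CommRing R]
    (M N B : Matrix n n R) (hNB : N * B = 1) (hBN : B * N = 1)
    (ε : R) (hε2 : ε * ε = 1) (hcomm : N * M = ε • (M * N)) (c : R) :
    Submodule.map (Matrix.toLin' N) (LinearMap.ker (Matrix.toLin' (M - c • 1)))
      = LinearMap.ker (Matrix.toLin' (M - (ε * c) • 1)) := by
  have hMN : M * N = ε • (N * M) := by
    rw [hcomm, smul_smul, hε2, one_smul]
  have hMB : M * B = ε • (B * M) := by
    calc M * B = B * (N * M) * B := by rw [← mul_assoc, hBN, one_mul]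
    _ = B * (ε • (M * N)) * B := by rw [hcomm]
    _ = ε • (B * M * (N * B)) := by
        rw [Matrix.mul_smul, Matrix.smul_mul, mul_assoc, mul_assoc, mul_assoc]
    _ = ε • (B * M) := by rw [hNB, mul_one]
  ext w
  simp only [Submodule.mem_map, LinearMap.mem_ker, Matrix.toLin'_apply, ker_mem_iff]
  constructor
  · rintro ⟨v, hv, rfl⟩
    rw [Matrix.mulVec_mulVec, hMN, Matrix.smul_mulVec, ← Matrix.mulVec_mulVec,
      hv, Matrix.mulVec_smul, smul_smul]
  · intro hw
    refine ⟨B.mulVec w, ?_, ?_⟩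
    · rw [Matrix.mulVec_mulVec, hMB, Matrix.smul_mulVec, ← Matrix.mulVec_mulVec,
        hw, Matrix.mulVec_smul, smul_smul, ← mul_assoc, hε2, one_mul]
    · rw [Matrix.mulVec_mulVec, hNB, Matrix.one_mulVec]

/-- With `M = μ·β_{x*}·α_x` as before, for every `(y,y*) ∈ H × H` the invertible
matrix `N = β_{y*}·α_y` maps the eigenspace `ker(M − 1)` isomorphically onto
`ker(M − ε·1)`, where `ε = ⟨x*,y⟩·⟨y*,x⟩`; in particular `N` preserves each of the
two eigenspaces of `M` when `ε = 1` and interchanges them when `ε = −1`. -/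
theorem statement4 {k : Type*} [Field k] (hchar : ringChar k ≠ 2)
    (i : k) (hi : i ^ 2 = -1) (x xs : H2) (hx : ¬(x = 0 ∧ xs = 0))
    (μ : k) (hμ1 : pairing k xs x = 1 → μ = 1) (hμ2 : pairing k xs x = -1 → μ = i)
    (M : Matrix H2 H2 k) (hM : M = μ • (betaM k xs * alphaM k x))
    (y ys : H2) (N : Matrix H2 H2 k) (hN : N = betaM k ys * alphaM k y)
    (ε : k) (hε : ε = pairing k xs y * pairing k ys x) :
    IsUnit N ∧
    Submodule.map (Matrix.toLin' N) (LinearMap.ker (Matrix.toLin' (M - 1)))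
      = LinearMap.ker (Matrix.toLin' (M - ε • 1)) ∧
    (ε = 1 →
      Submodule.map (Matrix.toLin' N) (LinearMap.ker (Matrix.toLin' (M - 1)))
        = LinearMap.ker (Matrix.toLin' (M - 1)) ∧
      Submodule.map (Matrix.toLin' N) (LinearMap.ker (Matrix.toLin' (M + 1)))
        = LinearMap.ker (Matrix.toLin' (M + 1))) ∧
    (ε = -1 →
      Submodule.map (Matrix.toLin' N) (LinearMap.ker (Matrix.toLin' (M - 1)))
        = LinearMap.ker (Matrix.toLin' (M + 1)) ∧
      Submodule.map (Matrix.toLin' N) (LinearMap.ker (Matrix.toLin' (M + 1)))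
        = LinearMap.ker (Matrix.toLin' (M - 1))) := by
  have hε2 : ε * ε = 1 := by
    rw [hε, mul_mul_mul_comm, pairing_mul_self, pairing_mul_self, one_mul]
  set B : Matrix H2 H2 k := alphaM k y * betaM k ys with hB
  have hNB : N * B = 1 := by
    rw [hN, hB, mul_assoc, ← mul_assoc (alphaM k y), alphaM_mul_alphaM, H2_add_self,
      alphaM_zero, one_mul, betaM_mul_self]
  have hBN : B * N = 1 := by
    rw [hN, hB, mul_assoc, ← mul_assoc (betaM k ys), betaM_mul_self, one_mul,
      alphaM_mul_alphaM, H2_add_self, alphaM_zero]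
  have hscal : μ * pairing k xs y = ε * (μ * pairing k ys x) := by
    rw [hε]
    linear_combination (-(μ * pairing k xs y)) * pairing_mul_self k ys x
  have hcomm : N * M = ε • (M * N) := by
    calc N * M
        = (μ * pairing k xs y) • ((betaM k xs * betaM k ys) * alphaM k (x + y)) := by
          rw [hM, hN, Matrix.mul_smul, core, smul_smul]
      _ = (ε * (μ * pairing k ys x)) • ((betaM k xs * betaM k ys) * alphaM k (x + y)) := by
          rw [hscal]
      _ = ε • (M * N) := by
          rw [hM, hN, Matrix.smul_mul, core, smul_smul, smul_smul,
            betaM_mul_betaM k ys xs, add_comm y x, mul_assoc ε μ (pairing k ys x)]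
  have K := key M N B hNB hBN ε hε2 hcomm
  refine ⟨⟨⟨N, B, hNB, hBN⟩, rfl⟩, ?_, ?_, ?_⟩
  · have := K 1; rwa [mul_one, one_smul] at this
  · intro h1
    constructor
    · have := K 1; rwa [h1, mul_one, one_smul] at this
    · have := K (-1); rwa [h1, one_mul, neg_smul, one_smul, sub_neg_eq_add] at this
  · intro h1
    constructor
    · have := K 1; rwa [h1, mul_one, one_smul, neg_smul, one_smul, sub_neg_eq_add] at this
    · have := K (-1); rwa [h1, neg_mul_neg, one_mul, one_smul, neg_smul, one_smul,
        sub_neg_eq_add] at this
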